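/- For every positive integer m and every real number x, the m-th iterated derivative of arctan at x equals sgn(-x)^{m-1} · (m-1)! / (1+x²)^{m/2} · sin( m · arcsin( 1/√(1+x²) ) ), where sgn(t) = 1 if t ≥ 0 and sgn(t) = -1 if t < 0. -/

import Mathlib

/-!
Since `arctan' y = 1 / (1 + y²) = Im (y - i)⁻¹` and `(y - i)⁻¹` has `n`-th derivative
`(-1)ⁿ n! (y - i)^{-(n+1)}`, we get `arctan^{(n+1)} x = (-1)ⁿ n! Im (x - i)^{-(n+1)}`.
In polar form `(x - i)⁻¹ = (1 + x²)^{-1/2} e^{iα}` with `α = π/2 - arctan x ∈ (0, π)`, so the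
imaginary part is `(1 + x²)^{-(n+1)/2} sin((n+1)α)`. Finally `arcsin (1/√(1+x²)) = π/2 - arctan |x|`
equals `α` for `x > 0` and `π - α` for `x ≤ 0`, and `sin((n+1)(π - θ)) = (-1)ⁿ sin((n+1)θ)`
accounts for the sign.
-/

/-- The signum function with `sgn 0 = 1`. -/
noncomputable def sgn (t : ℝ) : ℝ := if 0 ≤ t then 1 else -1

open Real
open Complex (I)

theorem ContinuousLinearMap.iteratedDeriv_comp_left {𝕜 F G : Type*} [NontriviallyNormedField 𝕜]
    [NormedAddCommGroup F] [NormedSpace 𝕜 F] [NormedAddCommGroup G] [NormedSpace 𝕜 G]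
    (L : F →L[𝕜] G) {f : 𝕜 → F} {x : 𝕜} {n : ℕ} (hf : ContDiffAt 𝕜 n f x) :
    iteratedDeriv n (L ∘ f) x = L (iteratedDeriv n f x) := by
  simp only [iteratedDeriv_eq_iteratedFDeriv, L.iteratedFDeriv_comp_left hf le_rfl,
    ContinuousLinearMap.compContinuousMultilinearMap_coe, Function.comp_apply]

theorem iteratedDeriv_comp_ofReal {F : ℂ → ℂ}
    (hF : ∀ (k : ℕ) (y : ℝ), DifferentiableAt ℂ (iteratedDeriv k F) y) (n : ℕ) :
    iteratedDeriv n (fun y : ℝ => F y) = fun y : ℝ => iteratedDeriv n F y := by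
  induction n with
  | zero => simp
  | succ n ih =>
    rw [iteratedDeriv_succ, ih]
    funext y
    rw [iteratedDeriv_succ]
    exact (hF n y).hasDerivAt.comp_ofReal.deriv

theorem iteratedDeriv_sub_const_inv {𝕜 : Type*} [NontriviallyNormedField 𝕜] (c : 𝕜) (n : ℕ) :
    iteratedDeriv n (fun z => (z - c)⁻¹) =
      fun z => (-1) ^ n * n.factorial * (z - c) ^ (-1 - n : ℤ) := by
  simpa [iteratedDeriv_eq_iterate] using iter_deriv_inv_linear_sub n (1 : 𝕜) c

theorem Complex.ofReal_sub_I_ne_zero (x : ℝ) : (x : ℂ) - I ≠ 0 := fun h => by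
  simpa using congrArg Complex.im h

theorem iteratedDeriv_ofReal_sub_I_inv (n : ℕ) (x : ℝ) :
    iteratedDeriv n (fun y : ℝ => ((y : ℂ) - I)⁻¹) x =
      (-1) ^ n * n.factorial * ((x : ℂ) - I)⁻¹ ^ (n + 1) := by
  rw [iteratedDeriv_comp_ofReal (F := fun z => (z - I)⁻¹), iteratedDeriv_sub_const_inv]
  · simp [← zpow_natCast, sub_eq_add_neg, add_comm]
  · intro k y
    have := Complex.ofReal_sub_I_ne_zero y
    rw [iteratedDeriv_sub_const_inv]
    fun_prop (disch := simp [this])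

theorem one_div_one_add_sq_eq_im_inv (y : ℝ) : 1 / (1 + y ^ 2) = (((y : ℂ) - I)⁻¹).im := by
  simp [Complex.normSq_apply, ← sq, add_comm]

theorem iteratedDeriv_succ_arctan (n : ℕ) (x : ℝ) :
    iteratedDeriv (n + 1) arctan x =
      (-1) ^ n * n.factorial * (((x : ℂ) - I)⁻¹ ^ (n + 1)).im := by
  have hsmooth : ContDiffAt ℝ n (fun y : ℝ => ((y : ℂ) - I)⁻¹) x :=
    (Complex.ofRealCLM.contDiff.contDiffAt.sub contDiffAt_const).inv
      (Complex.ofReal_sub_I_ne_zero x)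
  have him := Complex.imCLM.iteratedDeriv_comp_left hsmooth
  simp only [Function.comp_def, Complex.imCLM_apply] at him
  rw [iteratedDeriv_succ', Real.deriv_arctan]
  simp_rw [one_div_one_add_sq_eq_im_inv]
  rw [him, iteratedDeriv_ofReal_sub_I_inv]
  exact_mod_cast Complex.im_ofReal_mul ((-1) ^ n * n.factorial) _

theorem inv_ofReal_sub_I_eq_polar (x : ℝ) :
    ((x : ℂ) - I)⁻¹ = ((√(1 + x ^ 2))⁻¹ : ℝ) * Complex.exp ((π / 2 - arctan x : ℝ) * I) := by
  have hr : (√(1 + x ^ 2) : ℂ) ≠ 0 := Complex.ofReal_ne_zero.mpr (by positivity)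
  have hr2 : (√(1 + x ^ 2) : ℂ) ^ 2 = 1 + x ^ 2 := by
    exact_mod_cast Real.sq_sqrt (by positivity : (0 : ℝ) ≤ 1 + x ^ 2)
  refine inv_eq_of_mul_eq_one_right ?_
  rw [Complex.exp_mul_I, ← Complex.ofReal_cos, ← Complex.ofReal_sin, cos_pi_div_two_sub,
    sin_pi_div_two_sub, sin_arctan, cos_arctan]
  push_cast
  field_simp
  linear_combination (-1 : ℂ) * hr2 - Complex.I_sq

theorem im_inv_ofReal_sub_I_pow (x : ℝ) (n : ℕ) :
    (((x : ℂ) - I)⁻¹ ^ n).im = sin (n * (π / 2 - arctan x)) / (1 + x ^ 2) ^ ((n : ℝ) / 2) := by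
  rw [inv_ofReal_sub_I_eq_polar, mul_pow, ← Complex.exp_nat_mul, ← mul_assoc,
    ← Complex.ofReal_pow, ← Complex.ofReal_natCast, ← Complex.ofReal_mul, Complex.im_ofReal_mul,
    Complex.exp_ofReal_mul_I_im, rpow_div_two_eq_sqrt _ (by positivity), Real.rpow_natCast,
    inv_pow, inv_mul_eq_div]

theorem arcsin_one_div_sqrt_one_add_sq (x : ℝ) :
    arcsin (1 / √(1 + x ^ 2)) = π / 2 - arctan |x| := by
  rw [arcsin_eq_pi_div_two_sub_arccos, arctan_eq_arccos (abs_nonneg x), sq_abs, one_div]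

theorem neg_one_pow_mul_sin_succ_mul_pi_div_two_sub_arctan (k : ℕ) (x : ℝ) :
    (-1) ^ k * sin ((k + 1) * (π / 2 - arctan x)) =
      sgn (-x) ^ k * sin ((k + 1) * arcsin (1 / √(1 + x ^ 2))) := by
  rw [arcsin_one_div_sqrt_one_add_sq, sgn]
  split_ifs with hx
  · have hsq : ((-1 : ℝ) ^ k) ^ 2 = 1 := by rw [pow_right_comm, neg_one_sq, one_pow]
    rw [abs_of_nonpos (neg_nonneg.mp hx), arctan_neg, one_pow, one_mul,
      show (k + 1 : ℝ) * (π / 2 - arctan x) = (k + 1 : ℕ) * π - (k + 1) * (π / 2 - -arctan x) by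
        push_cast; ring,
      sin_nat_mul_pi_sub]
    linear_combination sin ((k + 1) * (π / 2 - -arctan x)) * hsq
  · rw [abs_of_pos (by linarith)]

theorem iteratedDeriv_arctan_closed_form (m : ℕ) (hm : 0 < m) (x : ℝ) :
    iteratedDeriv m Real.arctan x =
      sgn (-x) ^ (m - 1) * ((m - 1).factorial : ℝ) / (1 + x ^ 2) ^ ((m : ℝ) / 2)
        * Real.sin (m * Real.arcsin (1 / Real.sqrt (1 + x ^ 2))) := by
  obtain ⟨k, rfl⟩ := Nat.exists_eq_add_one_of_ne_zero hm.ne'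
  rw [iteratedDeriv_succ_arctan, im_inv_ofReal_sub_I_pow, Nat.add_sub_cancel]
  push_cast
  linear_combination (k.factorial / (1 + x ^ 2) ^ (((k : ℝ) + 1) / 2)) *
    neg_one_pow_mul_sin_succ_mul_pi_div_two_sub_arctan k x
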